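/- arXiv:2211.15193 — 2 statements merged into one kernel-verified Lean document; each statement's English description precedes it below -/
import Mathlib

section
/- Let p be a prime with p ≡ 5 or 11 (mod 24) such that p is not representable by 2x² + 27y². Then R(p, 5x² + 2xy + 11y²) = 2. -/
lemma sq_neg_six (p : ℕ) (hp : p.Prime) (h : p % 24 = 5 ∨ p % 24 = 11) :
    IsSquare (-6 : ZMod p) := by
  haveI : Fact p.Prime := ⟨hp⟩
  have hp2 : p ≠ 2 := by rintro rfl; omega
  have hne : ((-6 : ℤ) : ZMod p) ≠ 0 := by
    rw [Ne, ZMod.intCast_zmod_eq_zero_iff_dvd]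
    intro hd
    have h6 : (p : ℤ) ∣ 6 := dvd_neg.mp hd
    have h6' : p ∣ 6 := by exact_mod_cast h6
    have := Nat.le_of_dvd (by norm_num) h6'
    interval_cases p <;> omega
  have hL3 : legendreSym 3 (p : ℤ) = -1 := by
    rw [legendreSym.mod]
    have h32 : ((p : ℤ)) % ((3:ℕ):ℤ) = 2 := by push_cast; omega
    rw [h32]; decide
  have hrec := legendreSym.quadratic_reciprocity' (p := 3) (q := p) (by norm_num) hp2
  rw [hL3] at hrec
  have hexp : 3 / 2 * (p / 2) = p / 2 := by omega
  rw [hexp, show ((3:ℕ):ℤ) = (3:ℤ) by norm_num] at hrec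
  have key : legendreSym p (-6) = 1 := by
    have h6 : (-6 : ℤ) = -1 * 2 * 3 := by norm_num
    rw [h6, legendreSym.mul, legendreSym.mul, legendreSym.at_neg_one hp2,
      legendreSym.at_two hp2]
    rcases h with h5 | h11
    · have h4 : p % 4 = 1 := by omega
      have h8 : p % 8 = 5 := by omega
      have hχ4 : ZMod.χ₄ p = 1 := by rw [ZMod.χ₄_nat_mod_four, h4]; decide
      have hχ8 : ZMod.χ₈ p = -1 := by rw [ZMod.χ₈_nat_mod_eight, h8]; decide
      have hev : Even (p / 2) := by rw [Nat.even_iff]; omega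
      rw [hev.neg_one_pow] at hrec
      rw [hχ4, hχ8, hrec]; norm_num
    · have h4 : p % 4 = 3 := by omega
      have h8 : p % 8 = 3 := by omega
      have hχ4 : ZMod.χ₄ p = -1 := by rw [ZMod.χ₄_nat_mod_four, h4]; decide
      have hχ8 : ZMod.χ₈ p = -1 := by rw [ZMod.χ₈_nat_mod_eight, h8]; decide
      have hodd : Odd (p / 2) := by rw [Nat.odd_iff]; omega
      rw [hodd.neg_one_pow] at hrec
      rw [hχ4, hχ8, hrec]; norm_num
  have hsq := (legendreSym.eq_one_iff p hne).mp key
  have hcast : ((-6 : ℤ) : ZMod p) = (-6 : ZMod p) := by push_cast; ring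
  rwa [hcast] at hsq


lemma thue_six (p : ℕ) (hp : p.Prime) (hsq : IsSquare (-6 : ZMod p)) :
    ∃ x y : ℤ, ¬(x = 0 ∧ y = 0) ∧ x ^ 2 < (p : ℤ) ∧ y ^ 2 < (p : ℤ) ∧
      (p : ℤ) ∣ x ^ 2 + 6 * y ^ 2 := by
  haveI : Fact p.Prime := ⟨hp⟩
  obtain ⟨b, hb⟩ := hsq
  have hnsq : p.sqrt ^ 2 < p := by
    have h1 := Nat.sqrt_le' p
    rcases eq_or_lt_of_le h1 with he | hl
    · exfalso
      have hd : p.sqrt ∣ p := ⟨p.sqrt, by rw [← pow_two]; exact he.symm⟩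
      rcases hp.eq_one_or_self_of_dvd _ hd with h' | h' <;>
        rw [h'] at he <;> have := hp.two_le <;> nlinarith
    · exact hl
  set n := p.sqrt with hn
  have hcard : (Finset.univ : Finset (ZMod p)).card <
      ((Finset.range (n+1)) ×ˢ (Finset.range (n+1))).card := by
    rw [Finset.card_product, Finset.card_range, Finset.card_univ, ZMod.card]
    nlinarith [Nat.lt_succ_sqrt' p]
  obtain ⟨⟨a₁, c₁⟩, hmem1, ⟨a₂, c₂⟩, hmem2, hne, heq⟩ :=
    Finset.exists_ne_map_eq_of_card_lt_of_maps_to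
      (f := fun (q : ℕ × ℕ) => (q.1 : ZMod p) - b * (q.2 : ZMod p))
      hcard (fun q _ => Finset.mem_univ _)
  rw [Finset.mem_product, Finset.mem_range, Finset.mem_range] at hmem1 hmem2
  obtain ⟨ha₁, hc₁⟩ := hmem1
  obtain ⟨ha₂, hc₂⟩ := hmem2
  have hnp : ((n:ℤ))^2 < (p:ℤ) := by exact_mod_cast hnsq
  refine ⟨(a₁ : ℤ) - a₂, (c₁ : ℤ) - c₂, ?_, ?_, ?_, ?_⟩
  · rintro ⟨h1, h2⟩
    apply hne
    have e1 : a₁ = a₂ := by omega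
    have e2 : c₁ = c₂ := by omega
    rw [e1, e2]
  · have h1 : (a₁:ℤ) ≤ (n:ℤ) := by exact_mod_cast Nat.lt_succ_iff.mp ha₁
    have h2 : (a₂:ℤ) ≤ (n:ℤ) := by exact_mod_cast Nat.lt_succ_iff.mp ha₂
    have h3 : (0:ℤ) ≤ a₁ := Int.natCast_nonneg _
    have h4 : (0:ℤ) ≤ a₂ := Int.natCast_nonneg _
    nlinarith
  · have h1 : (c₁:ℤ) ≤ (n:ℤ) := by exact_mod_cast Nat.lt_succ_iff.mp hc₁
    have h2 : (c₂:ℤ) ≤ (n:ℤ) := by exact_mod_cast Nat.lt_succ_iff.mp hc₂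
    have h3 : (0:ℤ) ≤ c₁ := Int.natCast_nonneg _
    have h4 : (0:ℤ) ≤ c₂ := Int.natCast_nonneg _
    nlinarith
  · rw [← ZMod.intCast_zmod_eq_zero_iff_dvd]
    push_cast
    have hxy : ((a₁ : ZMod p) - a₂) = b * ((c₁ : ZMod p) - c₂) := by
      have h := heq
      simp only at h
      linear_combination h
    rw [hxy]
    linear_combination (((c₁:ZMod p) - c₂)^2) * hb.symm


lemma no_one_six (p : ℕ) (h3 : p % 3 = 2) (x y : ℤ) (heq : (p:ℤ) = x^2 + 6*y^2) : False := by
  have hc := congrArg (fun z : ℤ => (z : ZMod 3)) heq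
  push_cast at hc
  have hp3 : ((p:ℕ) : ZMod 3) = 2 := by
    rw [show ((p : ℕ) : ZMod 3) = ((p % 3 : ℕ) : ZMod 3) from (ZMod.natCast_mod p 3).symm, h3]
    rfl
  rw [hp3] at hc
  have : ∀ a b : ZMod 3, (2 : ZMod 3) ≠ a^2 + 6*b^2 := by decide
  exact this _ _ hc


lemma repr_two_three (p : ℕ) (hp : p.Prime) (h3 : p % 3 = 2)
    (hsq : IsSquare (-6 : ZMod p)) :
    ∃ s t : ℤ, (p:ℤ) = 2*s^2 + 3*t^2 := by
  obtain ⟨x, y, hxy0, hx, hy, hdvd⟩ := thue_six p hp hsq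
  obtain ⟨k, hk⟩ := hdvd
  have hppos : (0:ℤ) < p := by exact_mod_cast hp.pos
  have hpos : 0 < x^2 + 6*y^2 := by
    rcases (not_and_or.mp hxy0) with h | h
    · positivity
    · positivity
  have hk1 : 1 ≤ k := by nlinarith
  have hk6 : k ≤ 6 := by nlinarith
  interval_cases k
  · exact absurd (by linarith : (p:ℤ) = x^2+6*y^2) (fun h => no_one_six p h3 x y h)
  · have h2x : (2:ℤ) ∣ x := by
      refine Int.prime_two.dvd_of_dvd_pow (n := 2) ⟨(p:ℤ) - 3*y^2, by linarith⟩
    obtain ⟨s, rfl⟩ := h2x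
    exact ⟨s, y, by nlinarith⟩
  · have h3x : (3:ℤ) ∣ x := by
      refine Int.prime_three.dvd_of_dvd_pow (n := 2) ⟨(p:ℤ) - 2*y^2, by linarith⟩
    obtain ⟨w, rfl⟩ := h3x
    exact ⟨y, w, by nlinarith⟩
  · exfalso
    have h2x : (2:ℤ) ∣ x := by
      refine Int.prime_two.dvd_of_dvd_pow (n := 2) ⟨2*(p:ℤ) - 3*y^2, by linarith⟩
    obtain ⟨s, rfl⟩ := h2x
    have h2y : (2:ℤ) ∣ y := by
      have hdy : (2:ℤ) ∣ 3*y^2 := ⟨(p:ℤ) - s^2, by nlinarith⟩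
      have h2 : (2:ℤ) ∣ y^2 :=
        (Int.prime_two.dvd_mul.mp hdy).resolve_left (by norm_num)
      exact Int.prime_two.dvd_of_dvd_pow h2
    obtain ⟨t, rfl⟩ := h2y
    exact no_one_six p h3 s t (by nlinarith)
  · have hz : (x:ZMod 5)^2 + (y:ZMod 5)^2 = 0 := by
      have hc := congrArg (fun z : ℤ => (z : ZMod 5)) hk
      push_cast at hc
      have h50 : (5 : ZMod 5) = 0 := by decide
      rw [h50, mul_zero] at hc
      have h5y : (5:ZMod 5)*(y:ZMod 5)^2 = 0 := by rw [h50]; ring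
      linear_combination hc - h5y
    have hcases : (x:ZMod 5) = 2*(y:ZMod 5) ∨ (x:ZMod 5) = -2*(y:ZMod 5) := by
      revert hz
      generalize (x:ZMod 5) = a
      generalize (y:ZMod 5) = b
      revert a b; decide
    rcases hcases with hc | hc
    · have hd5 : (5:ℤ) ∣ x - 2*y := by
        have hz5 : ((x - 2*y : ℤ) : ZMod 5) = 0 := by push_cast; rw [hc]; ring
        exact_mod_cast (ZMod.intCast_zmod_eq_zero_iff_dvd _ 5).mp hz5
      have hc5 : (5:ℤ) ∣ x + 3*y := by
        obtain ⟨d, hd⟩ := hd5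
        exact ⟨d + y, by linarith⟩
      obtain ⟨c, hcc⟩ := hc5
      obtain ⟨d, hdd⟩ := hd5
      have hxv : x = 2*c + 3*d := by linarith
      have hyv : y = c - d := by linarith
      subst hxv hyv
      exact ⟨c, d, by nlinarith⟩
    · have hd5 : (5:ℤ) ∣ x + 2*y := by
        have hz5 : ((x + 2*y : ℤ) : ZMod 5) = 0 := by push_cast; rw [hc]; ring
        exact_mod_cast (ZMod.intCast_zmod_eq_zero_iff_dvd _ 5).mp hz5
      have hc5 : (5:ℤ) ∣ x - 3*y := by
        obtain ⟨d, hd⟩ := hd5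
        exact ⟨d - y, by linarith⟩
      obtain ⟨c, hcc⟩ := hc5
      obtain ⟨d, hdd⟩ := hd5
      have hxv : x = 2*c + 3*d := by linarith
      have hyv : y = d - c := by linarith
      subst hxv hyv
      exact ⟨c, d, by nlinarith⟩
  · exfalso
    have h2x : (2:ℤ) ∣ x := by
      refine Int.prime_two.dvd_of_dvd_pow (n := 2) ⟨3*(p:ℤ) - 3*y^2, by linarith⟩
    have h3x : (3:ℤ) ∣ x := by
      refine Int.prime_three.dvd_of_dvd_pow (n := 2) ⟨2*(p:ℤ) - 2*y^2, by linarith⟩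
    have h6x : (6:ℤ) ∣ x := by omega
    obtain ⟨w, rfl⟩ := h6x
    exact no_one_six p h3 y w (by nlinarith)


lemma uniq_two_three (p : ℕ) (hp : p.Prime) (hp2 : p ≠ 2) (s t u v : ℤ)
    (h1 : (p:ℤ) = 2*s^2 + 3*t^2) (h2 : (p:ℤ) = 2*u^2 + 3*v^2) :
    u^2 = s^2 ∧ v^2 = t^2 := by
  have hppos : (0:ℤ) < p := by exact_mod_cast hp.pos
  have hpint : Prime (p:ℤ) := Nat.prime_iff_prime_int.mp hp
  have hpp : (p:ℤ) * p = (2*s^2+3*t^2) * (2*u^2+3*v^2) := by rw [← h1, ← h2]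
  -- key cross identity
  have hAB : 2*((s*v - t*u)*(s*v + t*u)) = (p:ℤ)*(v^2 - t^2) := by
    linear_combination (-(v^2))*h1 + t^2*h2
  have hpdvd : (p:ℤ) ∣ (s*v - t*u)*(s*v + t*u) := by
    have hd2 : (p:ℤ) ∣ 2*((s*v - t*u)*(s*v + t*u)) := ⟨v^2 - t^2, hAB⟩
    rcases hpint.dvd_mul.mp hd2 with h | h
    · exfalso
      have : p ∣ 2 := by exact_mod_cast h
      exact hp2 ((Nat.prime_dvd_prime_iff_eq hp Nat.prime_two).mp this)
    · exact h
  have key : s^2*v^2 = t^2*u^2 := by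
    have hbound : ∀ A : ℤ, (p:ℤ) ∣ A → 6*A^2 ≤ (p:ℤ)^2 → A = 0 := by
      intro A hdvd hle
      by_contra hA0
      have h1' : (p:ℤ) ≤ |A| := Int.le_of_dvd (abs_pos.mpr hA0) ((dvd_abs _ _).mpr hdvd)
      have h2' : (p:ℤ)^2 ≤ A^2 := by
        have := sq_abs A
        nlinarith [abs_nonneg A]
      nlinarith
    rcases hpint.dvd_mul.mp hpdvd with h | h
    · have hid : (p:ℤ)^2 = (2*s*u + 3*t*v)^2 + 6*(s*v - t*u)^2 := by
        linear_combination hpp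
      have h0 : s*v - t*u = 0 := hbound _ h (by nlinarith [sq_nonneg (2*s*u + 3*t*v)])
      have : s*v = t*u := by linarith
      calc s^2*v^2 = (s*v)^2 := by ring
        _ = (t*u)^2 := by rw [this]
        _ = t^2*u^2 := by ring
    · have hid : (p:ℤ)^2 = (2*s*u - 3*t*v)^2 + 6*(s*v + t*u)^2 := by
        linear_combination hpp
      have h0 : s*v + t*u = 0 := hbound _ h (by nlinarith [sq_nonneg (2*s*u - 3*t*v)])
      have : s*v = -(t*u) := by linarith
      calc s^2*v^2 = (s*v)^2 := by ring
        _ = (-(t*u))^2 := by rw [this]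
        _ = t^2*u^2 := by ring
  constructor
  · have hu : (p:ℤ)*(u^2 - s^2) = 0 := by linear_combination u^2*h1 - s^2*h2 - 3*key
    rcases mul_eq_zero.mp hu with h | h
    · exact absurd h (by positivity)
    · linarith
  · have hv : (p:ℤ)*(v^2 - t^2) = 0 := by linear_combination v^2*h1 - t^2*h2 + 2*key
    rcases mul_eq_zero.mp hv with h | h
    · exact absurd h (by positivity)
    · linarith

theorem stmt17 (p : ℕ) (hp : p.Prime) (h : p % 24 = 5 ∨ p % 24 = 11)
    (hnr : ¬ ∃ x y : ℤ, (p : ℤ) = 2 * x ^ 2 + 27 * y ^ 2) :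
    Nat.card {q : ℤ × ℤ // 5 * q.1 ^ 2 + 2 * q.1 * q.2 + 11 * q.2 ^ 2 = (p : ℤ)} = 2 := by
  have hp2 : p ≠ 2 := by rintro rfl; omega
  have h3 : p % 3 = 2 := by omega
  have hppos : (0:ℤ) < p := by exact_mod_cast hp.pos
  obtain ⟨s, t, hst⟩ := repr_two_three p hp h3 (sq_neg_six p hp h)
  have h3t : ¬ (3:ℤ) ∣ t := by
    rintro ⟨m, rfl⟩
    exact hnr ⟨s, m, by linear_combination hst⟩
  have h3s : ¬ (3:ℤ) ∣ s := by
    rintro ⟨m, rfl⟩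
    have hd : (3:ℤ) ∣ (p:ℤ) := ⟨6*m^2 + t^2, by linear_combination hst⟩
    have hd' : 3 ∣ p := by exact_mod_cast hd
    have := (Nat.prime_dvd_prime_iff_eq Nat.prime_three hp).mp hd'
    omega
  obtain ⟨t₀, hrep0, hcong0, h3t0⟩ :
      ∃ t₀ : ℤ, (p:ℤ) = 2*s^2 + 3*t₀^2 ∧ (3:ℤ) ∣ s - t₀ ∧ ¬ (3:ℤ) ∣ t₀ := by
    have hs3 : s % 3 = 1 ∨ s % 3 = 2 := by omega
    have ht3 : t % 3 = 1 ∨ t % 3 = 2 := by omega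
    have hcase : (3:ℤ) ∣ s - t ∨ (3:ℤ) ∣ s + t := by
      rcases hs3 with h' | h' <;> rcases ht3 with h'' | h'' <;>
        [left; right; right; left] <;> omega
    rcases hcase with hc | hc
    · exact ⟨t, hst, hc, h3t⟩
    · exact ⟨-t, by linear_combination hst, by omega, by
        intro hd; exact h3t (by omega)⟩
  obtain ⟨y₀, hy₀⟩ := hcong0
  have hx3 : (3:ℤ) ∣ s + 2*t₀ := ⟨y₀ + t₀, by linarith⟩
  obtain ⟨x₀, hx₀⟩ := hx3
  have hs' : s = x₀ + 2*y₀ := by linarith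
  have ht' : t₀ = x₀ - y₀ := by linarith
  have hrep : 5*x₀^2 + 2*x₀*y₀ + 11*y₀^2 = (p:ℤ) := by
    have h0 : (p:ℤ) = 2*(x₀+2*y₀)^2 + 3*(x₀-y₀)^2 := by rw [← hs', ← ht']; exact hrep0
    linear_combination -h0
  have hne0 : ¬(x₀ = 0 ∧ y₀ = 0) := by
    rintro ⟨rfl, rfl⟩
    simp at hrep
    omega
  have hpairne : ((x₀, y₀) : ℤ × ℤ) ≠ (-x₀, -y₀) := by
    intro hcontra
    rw [Prod.mk.injEq] at hcontra
    exact hne0 ⟨by linarith [hcontra.1], by linarith [hcontra.2]⟩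
  have hset : {q : ℤ × ℤ | 5 * q.1 ^ 2 + 2 * q.1 * q.2 + 11 * q.2 ^ 2 = (p : ℤ)}
      = {(x₀, y₀), (-x₀, -y₀)} := by
    ext ⟨x, y⟩
    simp only [Set.mem_setOf_eq, Set.mem_insert_iff, Set.mem_singleton_iff, Prod.mk.injEq]
    constructor
    · intro hxy
      have huv : (p:ℤ) = 2*(x+2*y)^2 + 3*(x-y)^2 := by linear_combination -hxy
      obtain ⟨hu2, hv2⟩ := uniq_two_three p hp hp2 s t₀ (x+2*y) (x-y) hrep0 huv
      have hu : x+2*y = s ∨ x+2*y = -s := by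
        have hf : (x+2*y - s)*(x+2*y + s) = 0 := by linear_combination hu2
        rcases mul_eq_zero.mp hf with h' | h'
        · left; linarith
        · right; linarith
      have hv : x-y = t₀ ∨ x-y = -t₀ := by
        have hf : (x-y - t₀)*(x-y + t₀) = 0 := by linear_combination hv2
        rcases mul_eq_zero.mp hf with h' | h'
        · left; linarith
        · right; linarith
      rcases hu with hu | hu <;> rcases hv with hv | hv
      · left; constructor <;> linarith
      · exfalso; omega
      · exfalso; omega
      · right; constructor <;> linarith
    · rintro (⟨hx, hy⟩ | ⟨hx, hy⟩) <;> subst hx <;> subst hy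
      · linear_combination hrep
      · linear_combination hrep
  calc Nat.card {q : ℤ × ℤ // 5 * q.1 ^ 2 + 2 * q.1 * q.2 + 11 * q.2 ^ 2 = (p : ℤ)}
      = ({(x₀, y₀), (-x₀, -y₀)} : Set (ℤ × ℤ)).ncard := by
        rw [← hset]; exact Nat.card_coe_set_eq _
    _ = 2 := Set.ncard_pair hpairne
end

section
/- Let p be a prime with p ≡ 1 or 7 (mod 24) such that p is not representable by x² + 54y². Then R(p, 7x² + 6xy + 9y²) = 2. -/
-- Thue + descent: existence of p = a² + 6b²
lemma ex_sq_add_six_sq (p : ℕ) (hp : p.Prime) (h : p % 24 = 1 ∨ p % 24 = 7) :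
    ∃ a b : ℤ, a ^ 2 + 6 * b ^ 2 = (p : ℤ) := by
  haveI : Fact p.Prime := ⟨hp⟩
  have hp2 := hp.two_le
  -- square root of -6 mod p
  have hsq : IsSquare (-6 : ZMod p) := by
    have hodd : Odd p := Nat.odd_iff.mpr (by omega)
    have h6 : ((-6 : ℤ) : ZMod p) ≠ 0 := by
      rw [Ne, ZMod.intCast_zmod_eq_zero_iff_dvd]
      intro hdvd
      have h2 : (p : ℤ) ∣ 6 := (dvd_neg (α := ℤ)).mp (by simpa using hdvd)
      have h3 : p ∣ 6 := by exact_mod_cast h2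
      have := Nat.le_of_dvd (by norm_num) h3
      omega
    have key : legendreSym p (-6) = 1 := by
      rw [jacobiSym.legendreSym.to_jacobiSym, jacobiSym.mod_right _ hodd]
      rcases h with h | h <;> rw [show (-6 : ℤ).natAbs = 6 from rfl, h] <;> norm_num
    have := (legendreSym.eq_one_iff p h6).mp key
    simpa using this
  obtain ⟨r, hr⟩ := hsq
  set m : ℤ := (r.val : ℤ) with hm_def
  have hmr : ((m : ℤ) : ZMod p) = r := by
    simp [hm_def, ZMod.natCast_val, ZMod.cast_id]
  have hm : (p : ℤ) ∣ m ^ 2 + 6 := by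
    rw [← ZMod.intCast_zmod_eq_zero_iff_dvd]
    push_cast
    rw [hmr]
    linear_combination -hr
  -- Thue pigeonhole
  have hppos : (0 : ℤ) < p := by exact_mod_cast hp.pos
  have hthue : ∃ a b : ℤ, (p : ℤ) ∣ a ^ 2 + 6 * b ^ 2 ∧ 0 < a ^ 2 + 6 * b ^ 2 ∧
      a ^ 2 + 6 * b ^ 2 < 7 * p := by
    set s : ℕ := Nat.sqrt p with hs_def
    have h1 : s * s ≤ p := by simpa [pow_two] using Nat.sqrt_le' p
    have hslt : s * s < p := by
      rcases lt_or_eq_of_le h1 with h2 | h2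
      · exact h2
      · exfalso
        have hdvd : s ∣ p := ⟨s, h2.symm⟩
        rcases (Nat.Prime.eq_one_or_self_of_dvd hp s hdvd) with h3 | h3
        · rw [h3] at h2; omega
        · rw [h3] at h2; nlinarith
    have hlt : p < (s + 1) * (s + 1) := by
      rw [hs_def]
      simpa [pow_two, Nat.succ_eq_add_one] using Nat.lt_succ_sqrt' p
    haveI : NeZero p := ⟨hp.pos.ne'⟩
    have hcard : Fintype.card (ZMod p) < Fintype.card (Fin (s+1) × Fin (s+1)) := by
      rw [ZMod.card, Fintype.card_prod, Fintype.card_fin]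
      exact hlt
    obtain ⟨q1, q2, hne, heq⟩ :=
      Fintype.exists_ne_map_eq_of_card_lt
        (fun q : Fin (s+1) × Fin (s+1) => ((q.1 : ℕ) : ZMod p) - r * ((q.2 : ℕ) : ZMod p)) hcard
    refine ⟨((q1.1 : ℕ) : ℤ) - ((q2.1 : ℕ) : ℤ), ((q1.2 : ℕ) : ℤ) - ((q2.2 : ℕ) : ℤ), ?_, ?_, ?_⟩
    · -- divisibility
      have hdvd1 : (p : ℤ) ∣ (((q1.1 : ℕ) : ℤ) - ((q2.1 : ℕ) : ℤ)) -
          m * (((q1.2 : ℕ) : ℤ) - ((q2.2 : ℕ) : ℤ)) := by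
        rw [← ZMod.intCast_zmod_eq_zero_iff_dvd]
        push_cast
        rw [hmr]
        linear_combination heq
      obtain ⟨u, hu⟩ := hdvd1
      obtain ⟨v, hv⟩ := hm
      exact ⟨u * ((((q1.1 : ℕ) : ℤ) - ((q2.1 : ℕ) : ℤ)) +
          m * (((q1.2 : ℕ) : ℤ) - ((q2.2 : ℕ) : ℤ))) +
          v * (((q1.2 : ℕ) : ℤ) - ((q2.2 : ℕ) : ℤ)) ^ 2, by
        linear_combination ((((q1.1 : ℕ) : ℤ) - ((q2.1 : ℕ) : ℤ)) +
          m * (((q1.2 : ℕ) : ℤ) - ((q2.2 : ℕ) : ℤ))) * hu +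
          (((q1.2 : ℕ) : ℤ) - ((q2.2 : ℕ) : ℤ)) ^ 2 * hv⟩
    · -- positivity
      have hab : ((q1.1 : ℕ) : ℤ) - ((q2.1 : ℕ) : ℤ) ≠ 0 ∨
          ((q1.2 : ℕ) : ℤ) - ((q2.2 : ℕ) : ℤ) ≠ 0 := by
        by_contra hcon
        push_neg at hcon
        obtain ⟨hc1, hc2⟩ := hcon
        apply hne
        have e1 : (q1.1 : ℕ) = (q2.1 : ℕ) := by omega
        have e2 : (q1.2 : ℕ) = (q2.2 : ℕ) := by omega
        exact Prod.ext (Fin.ext e1) (Fin.ext e2)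
      rcases hab with h' | h'
      · have := sq_pos_of_ne_zero h'
        nlinarith [sq_nonneg (((q1.2 : ℕ) : ℤ) - ((q2.2 : ℕ) : ℤ))]
      · have := sq_pos_of_ne_zero h'
        nlinarith [sq_nonneg (((q1.1 : ℕ) : ℤ) - ((q2.1 : ℕ) : ℤ))]
    · -- bound
      have hx1 : (q1.1 : ℕ) ≤ s := Nat.lt_succ_iff.mp q1.1.isLt
      have hx2 : (q2.1 : ℕ) ≤ s := Nat.lt_succ_iff.mp q2.1.isLt
      have hy1 : (q1.2 : ℕ) ≤ s := Nat.lt_succ_iff.mp q1.2.isLt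
      have hy2 : (q2.2 : ℕ) ≤ s := Nat.lt_succ_iff.mp q2.2.isLt
      have h3 : ((s : ℤ) * s) < p := by exact_mod_cast hslt
      have hx1' : ((q1.1 : ℕ) : ℤ) ≤ (s : ℤ) := by exact_mod_cast hx1
      have hx2' : ((q2.1 : ℕ) : ℤ) ≤ (s : ℤ) := by exact_mod_cast hx2
      have hy1' : ((q1.2 : ℕ) : ℤ) ≤ (s : ℤ) := by exact_mod_cast hy1
      have hy2' : ((q2.2 : ℕ) : ℤ) ≤ (s : ℤ) := by exact_mod_cast hy2
      have hx1n : (0 : ℤ) ≤ ((q1.1 : ℕ) : ℤ) := Int.natCast_nonneg _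
      have hx2n : (0 : ℤ) ≤ ((q2.1 : ℕ) : ℤ) := Int.natCast_nonneg _
      have hy1n : (0 : ℤ) ≤ ((q1.2 : ℕ) : ℤ) := Int.natCast_nonneg _
      have hy2n : (0 : ℤ) ≤ ((q2.2 : ℕ) : ℤ) := Int.natCast_nonneg _
      nlinarith
  obtain ⟨a, b, hdvdk, hpos, hbound⟩ := hthue
  obtain ⟨K, hK⟩ := hdvdk
  have hp3 : p % 3 = 1 := by omega
  have hp8 : p % 8 = 1 ∨ p % 8 = 7 := by omega
  have hc3 : ((p : ℕ) : ZMod 3) = 1 := by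
    rw [← ZMod.natCast_mod, hp3]; rfl
  have hc8 : ((p : ℕ) : ZMod 8) = 1 ∨ ((p : ℕ) : ZMod 8) = 7 := by
    rcases hp8 with h8 | h8
    · left; rw [← ZMod.natCast_mod, h8]; rfl
    · right; rw [← ZMod.natCast_mod, h8]; rfl
  have hK1 : 1 ≤ K := by
    by_contra hcon
    push_neg at hcon
    have hK0 : K ≤ 0 := by omega
    have : (p : ℤ) * K ≤ 0 := mul_nonpos_of_nonneg_of_nonpos hppos.le hK0
    linarith
  have hK6 : K ≤ 6 := by
    by_contra hcon
    push_neg at hcon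
    have : (p : ℤ) * 7 ≤ (p : ℤ) * K := mul_le_mul_of_nonneg_left (by omega) hppos.le
    linarith
  clear hm hmr hr hbound hpos
  interval_cases K
  · exact ⟨a, b, by linarith⟩
  · -- K = 2 : impossible mod 3
    exfalso
    have hmod := congrArg (fun z : ℤ => (z : ZMod 3)) hK
    push_cast at hmod
    rw [hc3] at hmod
    revert hmod
    generalize ((a : ℤ) : ZMod 3) = x
    generalize ((b : ℤ) : ZMod 3) = y
    revert x y
    decide
  · -- K = 3 : impossible mod 8
    exfalso
    have hmod := congrArg (fun z : ℤ => (z : ZMod 8)) hK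
    push_cast at hmod
    rcases hc8 with h8 | h8 <;> rw [h8] at hmod <;> revert hmod <;>
      generalize ((a : ℤ) : ZMod 8) = x <;>
      generalize ((b : ℤ) : ZMod 8) = y <;> revert x y <;> decide
  · -- K = 4 : descend
    have hae : Even a := by
      have h1 : Even (a ^ 2) := ⟨2 * p - 3 * b ^ 2, by linarith⟩
      exact (Int.even_pow' (by norm_num)).mp h1
    obtain ⟨a1, ha1⟩ := hae
    rw [ha1] at hK
    ring_nf at hK
    have hbe : Even b := by
      have h1 : Even (3 * b ^ 2) := ⟨p - a1 ^ 2, by linarith⟩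
      rcases Int.even_mul.mp h1 with h' | h'
      · exact absurd h' (by decide)
      · exact (Int.even_pow' (by norm_num)).mp h'
    obtain ⟨b1, hb1⟩ := hbe
    rw [hb1] at hK
    ring_nf at hK
    refine ⟨a1, b1, by linarith⟩
  · -- K = 5 : impossible mod 8
    exfalso
    have hmod := congrArg (fun z : ℤ => (z : ZMod 8)) hK
    push_cast at hmod
    rcases hc8 with h8 | h8 <;> rw [h8] at hmod <;> revert hmod <;>
      generalize ((a : ℤ) : ZMod 8) = x <;>
      generalize ((b : ℤ) : ZMod 8) = y <;> revert x y <;> decide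
  · -- K = 6 : descend
    have ha3 : (3 : ℤ) ∣ a := by
      have hmod := congrArg (fun z : ℤ => (z : ZMod 3)) hK
      push_cast at hmod
      rw [hc3] at hmod
      have h0 : ((a : ℤ) : ZMod 3) = 0 := by
        revert hmod
        generalize ((a : ℤ) : ZMod 3) = x
        generalize ((b : ℤ) : ZMod 3) = y
        revert x y
        decide
      have := (ZMod.intCast_zmod_eq_zero_iff_dvd a 3).mp h0
      exact_mod_cast this
    obtain ⟨a1, ha1⟩ := ha3
    rw [ha1] at hK
    ring_nf at hK
    have hae : Even a1 := by
      have h1 : Even (3 * a1 ^ 2) := ⟨p - b ^ 2, by linarith⟩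
      rcases Int.even_mul.mp h1 with h' | h'
      · exact absurd h' (by decide)
      · exact (Int.even_pow' (by norm_num)).mp h'
    obtain ⟨a2, ha2⟩ := hae
    rw [ha2] at hK
    ring_nf at hK
    refine ⟨b, a2, by linarith⟩

-- Uniqueness of representation p = a² + 6b² up to signs
lemma uniq_sq_add_six_sq (p : ℕ) (hp : p.Prime) {a b c d : ℤ}
    (ha : a ^ 2 + 6 * b ^ 2 = (p : ℤ)) (hc : c ^ 2 + 6 * d ^ 2 = (p : ℤ)) :
    (c = a ∧ d = b) ∨ (c = -a ∧ d = -b) ∨ (c = a ∧ d = -b) ∨ (c = -a ∧ d = b) := by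
  have hpI : Prime (p : ℤ) := Nat.prime_iff_prime_int.mp hp
  have hppos : (0 : ℤ) < p := by exact_mod_cast hp.pos
  have key : (p : ℤ) ∣ (a * d - b * c) * (a * d + b * c) :=
    ⟨d ^ 2 - b ^ 2, by linear_combination d ^ 2 * ha - b ^ 2 * hc⟩
  rcases hpI.dvd_or_dvd key with hdvd | hdvd
  · -- p ∣ ad - bc
    obtain ⟨t, ht⟩ := hdvd
    have hid : (p : ℤ) ^ 2 = (a * c + 6 * b * d) ^ 2 + 6 * (a * d - b * c) ^ 2 := by
      linear_combination (-(c ^ 2 + 6 * d ^ 2)) * ha - (p : ℤ) * hc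
    have ht0 : t = 0 := by
      by_contra ht0
      have h1 : 1 ≤ t ^ 2 := by
        rcases (Ne.lt_or_gt ht0) with h' | h' <;> nlinarith
      rw [ht] at hid
      have h2 : (p : ℤ) ^ 2 * 1 ≤ (p : ℤ) ^ 2 * t ^ 2 :=
        mul_le_mul_of_nonneg_left h1 (sq_nonneg _)
      nlinarith [sq_nonneg (a * c + 6 * b * d)]
    rw [ht0, mul_zero] at ht
    have had : a * d = b * c := by linarith
    have hsq : (a * c + 6 * b * d - p) * (a * c + 6 * b * d + p) = 0 := by
      linear_combination (-1 : ℤ) * hid - 6 * (a * d - b * c) * ht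
    rcases mul_eq_zero.mp hsq with h0 | h0
    · -- ac + 6bd = p : (c,d) = (a,b)
      left
      have hca : a * (p : ℤ) = c * (p : ℤ) := by
        linear_combination c * ha + 6 * b * had - a * h0
      have hdb : b * (p : ℤ) = d * (p : ℤ) := by
        linear_combination d * ha - a * had - b * h0
      constructor
      · exact (mul_right_cancel₀ hppos.ne' hca).symm
      · exact (mul_right_cancel₀ hppos.ne' hdb).symm
    · -- ac + 6bd = -p : (c,d) = (-a,-b)
      right; left
      have hca : (-a) * (p : ℤ) = c * (p : ℤ) := by
        linear_combination c * ha + 6 * b * had - a * h0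
      have hdb : (-b) * (p : ℤ) = d * (p : ℤ) := by
        linear_combination d * ha - a * had - b * h0
      constructor
      · exact (mul_right_cancel₀ hppos.ne' hca).symm
      · exact (mul_right_cancel₀ hppos.ne' hdb).symm
  · -- p ∣ ad + bc
    obtain ⟨t, ht⟩ := hdvd
    have hid : (p : ℤ) ^ 2 = (a * c - 6 * b * d) ^ 2 + 6 * (a * d + b * c) ^ 2 := by
      linear_combination (-(c ^ 2 + 6 * d ^ 2)) * ha - (p : ℤ) * hc
    have ht0 : t = 0 := by
      by_contra ht0
      have h1 : 1 ≤ t ^ 2 := by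
        rcases (Ne.lt_or_gt ht0) with h' | h' <;> nlinarith
      rw [ht] at hid
      have h2 : (p : ℤ) ^ 2 * 1 ≤ (p : ℤ) ^ 2 * t ^ 2 :=
        mul_le_mul_of_nonneg_left h1 (sq_nonneg _)
      nlinarith [sq_nonneg (a * c - 6 * b * d)]
    rw [ht0, mul_zero] at ht
    have had : a * d = -(b * c) := by linarith
    have hsq : (a * c - 6 * b * d - p) * (a * c - 6 * b * d + p) = 0 := by
      linear_combination (-1 : ℤ) * hid - 6 * (a * d + b * c) * ht
    rcases mul_eq_zero.mp hsq with h0 | h0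
    · -- ac - 6bd = p : (c,d) = (a,-b)
      right; right; left
      have hca : a * (p : ℤ) = c * (p : ℤ) := by
        linear_combination c * ha - 6 * b * had - a * h0
      have hdb : (-b) * (p : ℤ) = d * (p : ℤ) := by
        linear_combination d * ha - a * had + b * h0
      constructor
      · exact (mul_right_cancel₀ hppos.ne' hca).symm
      · exact (mul_right_cancel₀ hppos.ne' hdb).symm
    · -- ac - 6bd = -p : (c,d) = (-a, b)
      right; right; right
      have hca : (-a) * (p : ℤ) = c * (p : ℤ) := by
        linear_combination c * ha - 6 * b * had - a * h0
      have hdb : b * (p : ℤ) = d * (p : ℤ) := by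
        linear_combination d * ha - a * had + b * h0
      constructor
      · exact (mul_right_cancel₀ hppos.ne' hca).symm
      · exact (mul_right_cancel₀ hppos.ne' hdb).symm

theorem stmt18 (p : ℕ) (hp : p.Prime) (h : p % 24 = 1 ∨ p % 24 = 7)
    (hnr : ¬ ∃ x y : ℤ, (p : ℤ) = x ^ 2 + 54 * y ^ 2) :
    Nat.card {q : ℤ × ℤ // 7 * q.1 ^ 2 + 6 * q.1 * q.2 + 9 * q.2 ^ 2 = (p : ℤ)} = 2 := by
  obtain ⟨a, b, hab⟩ := ex_sq_add_six_sq p hp h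
  have hp3 : p % 3 = 1 := by omega
  have hc3 : ((p : ℕ) : ZMod 3) = 1 := by rw [← ZMod.natCast_mod, hp3]; rfl
  -- 3 does not divide b
  have hb3 : ¬ (3 : ℤ) ∣ b := by
    rintro ⟨b1, hb1⟩
    exact hnr ⟨a, b1, by rw [hb1] at hab; linear_combination -hab⟩
  -- mod-3 information
  have hmod := congrArg (fun z : ℤ => (z : ZMod 3)) hab
  push_cast at hmod
  rw [hc3] at hmod
  have ha0 : ((a : ℤ) : ZMod 3) ≠ 0 := by
    revert hmod
    generalize ((a : ℤ) : ZMod 3) = x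
    generalize ((b : ℤ) : ZMod 3) = y
    revert x y
    decide
  have hb0 : ((b : ℤ) : ZMod 3) ≠ 0 := by
    rw [Ne, ZMod.intCast_zmod_eq_zero_iff_dvd]
    exact_mod_cast hb3
  -- choose signs so that A ≡ B mod 3
  have hmain : ∃ A B : ℤ, A ^ 2 + 6 * B ^ 2 = (p : ℤ) ∧ (3 : ℤ) ∣ A - B ∧
      ¬ (3 : ℤ) ∣ B := by
    have hcase : ((a : ℤ) : ZMod 3) = ((b : ℤ) : ZMod 3) ∨
        ((a : ℤ) : ZMod 3) = -((b : ℤ) : ZMod 3) := by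
      revert ha0 hb0
      generalize ((a : ℤ) : ZMod 3) = x
      generalize ((b : ℤ) : ZMod 3) = y
      revert x y
      decide
    rcases hcase with hcc | hcc
    · refine ⟨a, b, hab, ?_, hb3⟩
      have h0 : ((a - b : ℤ) : ZMod 3) = 0 := by push_cast; rw [hcc]; ring
      exact_mod_cast (ZMod.intCast_zmod_eq_zero_iff_dvd (a - b) 3).mp h0
    · refine ⟨a, -b, by linear_combination hab, ?_, by rw [dvd_neg]; exact hb3⟩
      have h0 : ((a - -b : ℤ) : ZMod 3) = 0 := by push_cast; rw [hcc]; ring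
      exact_mod_cast (ZMod.intCast_zmod_eq_zero_iff_dvd (a - -b) 3).mp h0
  obtain ⟨A, B, hABp, hdvd3, hB3⟩ := hmain
  obtain ⟨c, hc⟩ := hdvd3
  have hB0 : B ≠ 0 := fun h0 => hB3 (h0 ▸ dvd_zero 3)
  have hAB' : ¬ (3 : ℤ) ∣ A + B := by
    rintro ⟨t, ht⟩
    have h2B : (3 : ℤ) ∣ 2 * B := ⟨t - c, by linarith⟩
    have h3p : Prime (3 : ℤ) := Int.prime_three
    rcases h3p.dvd_or_dvd h2B with h' | h'
    · norm_num at h'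
    · exact hB3 h'
  set S : Set (ℤ × ℤ) := {q | 7 * q.1 ^ 2 + 6 * q.1 * q.2 + 9 * q.2 ^ 2 = (p : ℤ)} with hS_def
  have hSeq : S = {(B, c), (-B, -c)} := by
    ext q
    simp only [hS_def, Set.mem_setOf_eq, Set.mem_insert_iff, Set.mem_singleton_iff]
    constructor
    · intro hq
      have hrep : (q.1 + 3 * q.2) ^ 2 + 6 * q.1 ^ 2 = (p : ℤ) := by linear_combination hq
      rcases uniq_sq_add_six_sq p hp hABp hrep with ⟨h1, h2⟩ | ⟨h1, h2⟩ | ⟨h1, h2⟩ | ⟨h1, h2⟩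
      · left
        have : q.2 = c := by linarith
        exact Prod.ext h2 this
      · right
        have : q.2 = -c := by linarith
        exact Prod.ext h2 this
      · exfalso
        exact hAB' ⟨q.2, by linarith⟩
      · exfalso
        exact hAB' ⟨-q.2, by linarith⟩
    · intro hq
      rcases hq with hq | hq <;> rw [hq] <;> simp only [] <;>
        linear_combination hABp - (A + B + 3 * c) * hc
  have hne : ((B, c) : ℤ × ℤ) ≠ (-B, -c) := by
    intro hcon
    have h1 : B = -B := congrArg Prod.fst hcon
    exact hB0 (by linarith)
  show Nat.card ↥S = 2
  rw [Nat.card_coe_set_eq, hSeq]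
  exact Set.ncard_pair hne
end
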